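/- arXiv:2205.12251 — 3 statements merged into one kernel-verified Lean document; each statement's English description precedes it below -/
import Mathlib

section
/- Let ι be a finite type, T ≥ 3 an integer, Γ_1, …, Γ_T ⊆ ι pairwise disjoint finsets, and Γ̃ ⊆ ι a finset such that Γ_j ∩ Γ̃ has exactly one element for each j. Let ψ ∈ H be a unit vector. Then p_qu(ψ) − 1/2 = (1/2)·∑_σ ( |⟨ψ, φ⁺_σ⟩|² − |⟨ψ, φ⁻_σ⟩|² ), where the sum ranges over all σ : ι → ZMod 2 satisfying ∑_{b∈Γ_j} σ b = 0 in ZMod 2 for every j = 1,…,T, and φ^±_σ = (1/√2)(δ_σ ± V_{Γ̃} δ_σ), δ_σ being the computational basis vector supported at σ. -/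
open Finset

noncomputable section

/-- The Hilbert space of qubits at the elements of `ι`. -/
abbrev QubitSpace (ι : Type*) := (ι → ZMod 2) → ℂ

/-- Indicator function of a finset, valued in `ZMod 2`. -/
def indicZ2 {ι : Type*} [DecidableEq ι] (S : Finset ι) : ι → ZMod 2 :=
  fun b => if b ∈ S then 1 else 0

/-- The Z-type operator `W_S`. -/
def Wop {ι : Type*} [DecidableEq ι] (S : Finset ι) :
    Module.End ℂ (QubitSpace ι) where
  toFun ψ := fun σ => (-1 : ℂ) ^ (∑ b ∈ S, σ b).val * ψ σ
  map_add' ψ φ := by funext σ; simp [mul_add]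
  map_smul' c ψ := by funext σ; simp; ring

/-- The X-type operator `V_S`. -/
def Vop {ι : Type*} [DecidableEq ι] (S : Finset ι) :
    Module.End ℂ (QubitSpace ι) where
  toFun ψ := fun σ => ψ (σ + indicZ2 S)
  map_add' _ _ := rfl
  map_smul' _ _ := rfl

/-- The inner product `⟨ψ, φ⟩ = ∑_σ conj (ψ σ) · φ σ`. -/
def qInner {ι : Type*} [Fintype ι] [DecidableEq ι] (ψ φ : QubitSpace ι) : ℂ :=
  ∑ σ, (starRingEnd ℂ) (ψ σ) * φ σ

/-- Square root of an involution: `W^{1/2} = (1/2)(1+W) + (i/2)(1−W)`. -/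
def sqrtInv {E : Type*} [AddCommGroup E] [Module ℂ E] (W : Module.End ℂ E) :
    Module.End ℂ E :=
  ((2 : ℂ)⁻¹) • (1 + W) + (Complex.I * (2 : ℂ)⁻¹) • (1 - W)

/-- `W^{a/2}` for `a ∈ {0,1}`: the identity if `a = 0`, `W^{1/2}` if `a = 1`. -/
def halfPow {E : Type*} [AddCommGroup E] [Module ℂ E] (W : Module.End ℂ E)
    (a : ℕ) : Module.End ℂ E :=
  if a = 0 then 1 else sqrtInv W

/-- The post-strategy state `ψ' = (∏_j W_{Γ_j}^{a_j/2}) ψ` (the factors are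
commuting diagonal operators, so the order of the product is immaterial). -/
def postState {ι : Type*} [DecidableEq ι] {T : ℕ} (Γ : Fin T → Finset ι)
    (a : Fin T → ℕ) (ψ : QubitSpace ι) : QubitSpace ι :=
  ((List.ofFn fun j => halfPow (Wop (Γ j)) (a j)).prod) ψ

/-- The X-basis vector `χ_y(σ) = 2^{−|ι|/2} (−1)^{∑_b σ(b)·y(b)}`. -/
def chi {ι : Type*} [Fintype ι] (y : ι → ZMod 2) : QubitSpace ι :=
  fun σ => (((Real.sqrt 2 ^ Fintype.card ι)⁻¹ : ℝ) : ℂ) *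
    (-1 : ℂ) ^ (∑ b, (σ b).val * (y b).val)

/-- `r = ((∑_j a_j)/2) mod 2 ∈ ZMod 2`. -/
def rOf {T : ℕ} (a : Fin T → ℕ) : ZMod 2 := (((∑ j, a j) / 2 : ℕ) : ZMod 2)

/-- The winning probability on input `a`:
`p(ψ, a) = ∑_{y : ∑_{b ∈ Γ̃} y b = r} |⟨χ_y, ψ'⟩|²`. -/
def winProb {ι : Type*} [Fintype ι] [DecidableEq ι] {T : ℕ}
    (Γ : Fin T → Finset ι) (Γt : Finset ι) (a : Fin T → ℕ)
    (ψ : QubitSpace ι) : ℝ :=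
  ∑ y ∈ univ.filter (fun y : ι → ZMod 2 => ∑ b ∈ Γt, y b = rOf a),
    ‖qInner (chi y) (postState Γ a ψ)‖ ^ 2

/-- The quantum winning probability: the average of `p(ψ, a)` over the
`2^{T−1}` valid inputs `a` (those with `∑_j a_j` even). -/
def quantumWinProb {ι : Type*} [Fintype ι] [DecidableEq ι] {T : ℕ}
    (Γ : Fin T → Finset ι) (Γt : Finset ι) (ψ : QubitSpace ι) : ℝ :=
  (∑ a ∈ univ.filter (fun a : Fin T → Fin 2 => Even (∑ j, (a j : ℕ))),
      winProb Γ Γt (fun j => (a j : ℕ)) ψ) / 2 ^ (T - 1)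

/-- The computational basis vector `δ_σ`. -/
def deltaVec {ι : Type*} [DecidableEq (ι → ZMod 2)] (σ : ι → ZMod 2) :
    QubitSpace ι :=
  fun τ => if τ = σ then 1 else 0

/-!
Every factor `W_{Γ_j}^{a_j/2}` is diagonal, so `ψ' = ω_a ψ` for the unimodular phase
`ω_a(σ) = ∏_j i^{a_j s_j(σ)}`, where `s_j(σ) = ∑_{b ∈ Γ_j} σ b`. Writing the constraint
`∑_{b ∈ Γ̃} y b = r` as `(1 + (-1)^{r + e ⬝ y}) / 2` with `e = 𝟙_{Γ̃}`, Parseval turns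
`p(ψ, a)` into `1/2 + (-1)^r/2 · ∑_σ conj ψ'(σ) ψ'(σ + e)`. Because `Γ̃` meets every `Γ_j`
once, translation by `e` flips every `s_j`, and then
`(-1)^r conj ω_a(σ) ω_a(σ + e) = (-1)^{∑_j a_j s_j(σ)}`. Averaging over the even inputs `a`
keeps exactly the `σ` whose parities `s_j(σ)` are all equal; those with all `s_j = 1` are the
translates by `e` of those with all `s_j = 0`, and the two contributions add up to
`2 Re (conj ψ(σ) ψ(σ + e)) = |⟨ψ, φ⁺_σ⟩|² - |⟨ψ, φ⁻_σ⟩|²`.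
-/

open scoped ComplexConjugate

def parityChar : AddChar (ZMod 2) ℂ where
  toFun x := (-1) ^ x.val
  map_zero_eq_one' := rfl
  map_add_eq_mul' x y := by rw [ZMod.val_add, ← neg_one_pow_eq_pow_mod_two, pow_add]

lemma parityChar_apply (x : ZMod 2) : parityChar x = (-1) ^ x.val := rfl

@[simp] lemma parityChar_zero : parityChar 0 = 1 := AddChar.map_zero_eq_one _
@[simp] lemma parityChar_one : parityChar 1 = -1 := pow_one _

lemma zmod2_eq_zero_or_eq_one (x : ZMod 2) : x = 0 ∨ x = 1 := by
  revert x; decide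

lemma parityChar_eq_one_iff {x : ZMod 2} : parityChar x = 1 ↔ x = 0 := by
  rcases zmod2_eq_zero_or_eq_one x with rfl | rfl <;> norm_num

lemma parityChar_natCast (n : ℕ) : parityChar n = (-1) ^ n := by
  rw [parityChar_apply, ZMod.val_natCast, ← neg_one_pow_eq_pow_mod_two]

lemma conj_parityChar (x : ZMod 2) : conj (parityChar x) = parityChar x := by
  simp [parityChar_apply]

lemma parityChar_sum {α : Type*} (s : Finset α) (f : α → ZMod 2) :
    parityChar (∑ i ∈ s, f i) = ∏ i ∈ s, parityChar (f i) := by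
  classical
  induction s using Finset.induction_on with
  | empty => simp
  | insert i s hi ih => rw [sum_insert hi, prod_insert hi, AddChar.map_add_eq_mul, ih]

lemma sum_parityChar_dotProduct {κ : Type*} [Fintype κ] [DecidableEq κ] (u : κ → ZMod 2) :
    ∑ y, parityChar (u ⬝ᵥ y) = if u = 0 then 2 ^ Fintype.card κ else 0 := by
  let χ : AddChar (κ → ZMod 2) ℂ :=
    { toFun := fun y => parityChar (u ⬝ᵥ y)
      map_zero_eq_one' := by simp
      map_add_eq_mul' := fun y z => by simp [dotProduct_add, AddChar.map_add_eq_mul] }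
  have hχ : χ = 0 ↔ u = 0 := by
    refine ⟨fun h => funext fun b => ?_, fun h => by ext y; simp [χ, h]⟩
    simpa [χ, parityChar_eq_one_iff] using AddChar.eq_zero_iff.mp h (Pi.single b 1)
  calc ∑ y, parityChar (u ⬝ᵥ y) = ∑ y, χ y := rfl
    _ = _ := by simp [AddChar.sum_eq_ite χ, hχ]

lemma sum_filter_eq_parityChar {α : Type*} (s : Finset α) (g : α → ZMod 2) (r : ZMod 2)
    (f : α → ℂ) :
    ∑ x ∈ s with g x = r, f x
      = 2⁻¹ * (∑ x ∈ s, f x + parityChar r * ∑ x ∈ s, parityChar (g x) * f x) := by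
  rw [sum_filter, mul_sum, ← sum_add_distrib, mul_sum]
  refine sum_congr rfl fun x _ => ?_
  rcases zmod2_eq_zero_or_eq_one (g x) with h | h <;>
    rcases zmod2_eq_zero_or_eq_one r with rfl | rfl <;> norm_num [h] <;> ring

section
variable {ι : Type*} [Fintype ι] [DecidableEq ι]

omit [DecidableEq ι] in
lemma chi_apply (y σ : ι → ZMod 2) :
    chi y σ = ((√2 ^ Fintype.card ι)⁻¹ : ℝ) * parityChar (σ ⬝ᵥ y) := by
  rw [chi, ← parityChar_natCast]
  push_cast [ZMod.natCast_val, ZMod.cast_id', id]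
  rfl

lemma qInner_chi (y : ι → ZMod 2) (φ : QubitSpace ι) :
    qInner (chi y) φ = ((√2 ^ Fintype.card ι)⁻¹ : ℝ) * ∑ σ, parityChar (σ ⬝ᵥ y) * φ σ := by
  simp only [qInner, chi_apply, map_mul, Complex.conj_ofReal, conj_parityChar, mul_sum, mul_assoc]

lemma norm_qInner_chi_sq (y : ι → ZMod 2) (φ : QubitSpace ι) :
    (‖qInner (chi y) φ‖ ^ 2 : ℂ) = (2 ^ Fintype.card ι)⁻¹ *
      ∑ σ, ∑ τ, parityChar ((σ + τ) ⬝ᵥ y) * (conj (φ σ) * φ τ) := by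
  have hc : (((√2 ^ Fintype.card ι)⁻¹ : ℝ) : ℂ) * ((√2 ^ Fintype.card ι)⁻¹ : ℝ)
      = (2 ^ Fintype.card ι)⁻¹ := by
    rw [← Complex.ofReal_mul, ← mul_inv, ← mul_pow, Real.mul_self_sqrt zero_le_two]
    push_cast; rfl
  rw [← Complex.conj_mul', qInner_chi, map_mul, Complex.conj_ofReal, map_sum,
    mul_mul_mul_comm, hc, sum_mul_sum]
  simp only [map_mul, conj_parityChar, add_dotProduct, AddChar.map_add_eq_mul]
  congr 1
  refine sum_congr rfl fun σ _ => sum_congr rfl fun τ _ => by ring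

lemma sum_parityChar_mul_norm_qInner_chi_sq (u : ι → ZMod 2) (φ : QubitSpace ι) :
    ∑ y, parityChar (u ⬝ᵥ y) * (‖qInner (chi y) φ‖ ^ 2 : ℂ) = ∑ σ, conj (φ σ) * φ (σ + u) := by
  have hτ : ∀ σ τ : ι → ZMod 2, u + σ + τ = 0 ↔ τ = σ + u := fun σ τ => by
    rw [add_comm, ← eq_neg_iff_add_eq_zero, ZModModule.neg_eq_self, add_comm u]
  calc ∑ y, parityChar (u ⬝ᵥ y) * (‖qInner (chi y) φ‖ ^ 2 : ℂ)
      = (2 ^ Fintype.card ι)⁻¹ * ∑ σ, ∑ τ,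
          (∑ y, parityChar ((u + σ + τ) ⬝ᵥ y)) * (conj (φ σ) * φ τ) := by
        simp only [norm_qInner_chi_sq, mul_sum, sum_mul]
        rw [sum_comm]
        refine sum_congr rfl fun σ _ => ?_
        rw [sum_comm]
        refine sum_congr rfl fun τ _ => sum_congr rfl fun y _ => ?_
        rw [add_assoc, add_dotProduct u, AddChar.map_add_eq_mul]
        ring
    _ = ∑ σ, conj (φ σ) * φ (σ + u) := by
        simp only [sum_parityChar_dotProduct, hτ, ite_mul, zero_mul, sum_ite_eq', mem_univ,
          if_true, mul_sum]
        refine sum_congr rfl fun σ _ => ?_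
        rw [← mul_assoc, inv_mul_cancel₀ (pow_ne_zero _ two_ne_zero), one_mul]

lemma sum_filter_norm_qInner_chi_sq (S : Finset ι) (r : ZMod 2) (φ : QubitSpace ι) :
    ∑ y with ∑ b ∈ S, y b = r, (‖qInner (chi y) φ‖ ^ 2 : ℂ)
      = 2⁻¹ * (qInner φ φ + parityChar r * ∑ σ, conj (φ σ) * φ (σ + indicZ2 S)) := by
  have hS : ∀ y : ι → ZMod 2, ∑ b ∈ S, y b = indicZ2 S ⬝ᵥ y := fun y => by
    simp [dotProduct, indicZ2, sum_ite_mem]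
  have parseval : ∑ y, (‖qInner (chi y) φ‖ ^ 2 : ℂ) = qInner φ φ := by
    simpa [qInner] using sum_parityChar_mul_norm_qInner_chi_sq 0 φ
  simp only [sum_filter_eq_parityChar, hS, sum_parityChar_mul_norm_qInner_chi_sq, parseval]

end

lemma prod_ofFn_apply_of_diagonal {R α : Type*} [CommSemiring R] {n : ℕ}
    (A : Fin n → Module.End R (α → R)) (f : Fin n → α → R)
    (hA : ∀ j ψ σ, A j ψ σ = f j σ * ψ σ) (ψ : α → R) (σ : α) :
    (List.ofFn A).prod ψ σ = (∏ j, f j σ) * ψ σ := by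
  induction n with
  | zero => simp
  | succ n ih =>
    rw [List.ofFn_succ, List.prod_cons, Module.End.mul_apply, hA,
      ih (fun j => A j.succ) (fun j => f j.succ) (fun j => hA j.succ), Fin.prod_univ_succ,
      mul_assoc]

section
variable {ι : Type*} [DecidableEq ι]

lemma halfPow_Wop_apply (S : Finset ι) (x : ZMod 2) (ψ : QubitSpace ι) (σ : ι → ZMod 2) :
    halfPow (Wop S) x.val ψ σ = Complex.I ^ (x.val * (∑ b ∈ S, σ b).val) * ψ σ := by
  have hval : (1 : ZMod 2).val = 1 := rfl
  rcases zmod2_eq_zero_or_eq_one x with rfl | rfl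
  · simp [halfPow]
  · simp only [halfPow, sqrtInv, Wop]
    rcases zmod2_eq_zero_or_eq_one (∑ b ∈ S, σ b) with h | h <;>
      simp [h, hval] <;> ring

lemma postState_apply {T : ℕ} (Γ : Fin T → Finset ι) (a : Fin T → ZMod 2)
    (ψ : QubitSpace ι) (σ : ι → ZMod 2) :
    postState Γ (fun j => (a j).val) ψ σ
      = (∏ j, Complex.I ^ ((a j).val * (∑ b ∈ Γ j, σ b).val)) * ψ σ :=
  prod_ofFn_apply_of_diagonal _ _ (fun j => halfPow_Wop_apply (Γ j) (a j)) ψ σ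

end

lemma conj_I_pow_mul_I_pow (x s : ZMod 2) :
    conj (Complex.I ^ (x.val * s.val)) * Complex.I ^ (x.val * (s + 1).val)
      = Complex.I ^ x.val * parityChar (x * s) := by
  have hval : (1 : ZMod 2).val = 1 := rfl
  have htwo : (1 + 1 : ZMod 2) = 0 := rfl
  rcases zmod2_eq_zero_or_eq_one x with rfl | rfl <;>
    rcases zmod2_eq_zero_or_eq_one s with rfl | rfl <;> simp [hval, htwo]

lemma I_pow_mul_parityChar_half_eq_one {k : ℕ} (hk : Even k) :
    Complex.I ^ k * parityChar (k / 2 : ℕ) = 1 := by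
  obtain ⟨m, rfl⟩ := hk
  rw [← two_mul, Nat.mul_div_cancel_left m two_pos, pow_mul, Complex.I_sq, parityChar_natCast,
    ← mul_pow, neg_one_mul, neg_neg, one_pow]

section
variable {ι : Type*} [DecidableEq ι] {T : ℕ}

def blockParities (Γ : Fin T → Finset ι) (σ : ι → ZMod 2) : Fin T → ZMod 2 :=
  fun j => ∑ b ∈ Γ j, σ b

lemma blockParities_add_indicZ2 (Γ : Fin T → Finset ι) (Γt : Finset ι)
    (hcap : ∀ j, (Γ j ∩ Γt).card = 1) (σ : ι → ZMod 2) :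
    blockParities Γ (σ + indicZ2 Γt) = blockParities Γ σ + 1 := by
  funext j
  simp [blockParities, sum_add_distrib, indicZ2, sum_ite_mem, hcap j]

lemma conj_postState_mul_postState_add_indicZ2 (Γ : Fin T → Finset ι) (Γt : Finset ι)
    (hcap : ∀ j, (Γ j ∩ Γt).card = 1) (a : Fin T → ZMod 2) (ψ : QubitSpace ι)
    (σ : ι → ZMod 2) :
    conj (postState Γ (fun j => (a j).val) ψ σ)
        * postState Γ (fun j => (a j).val) ψ (σ + indicZ2 Γt)
      = Complex.I ^ (∑ j, (a j).val) * parityChar (a ⬝ᵥ blockParities Γ σ)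
        * (conj (ψ σ) * ψ (σ + indicZ2 Γt)) := by
  have hflip j : ∑ b ∈ Γ j, (σ + indicZ2 Γt) b = blockParities Γ σ j + 1 :=
    congrFun (blockParities_add_indicZ2 Γ Γt hcap σ) j
  simp only [postState_apply, map_mul, map_prod, hflip]
  calc _ = (∏ j, conj (Complex.I ^ ((a j).val * (blockParities Γ σ j).val))
              * Complex.I ^ ((a j).val * (blockParities Γ σ j + 1).val))
            * (conj (ψ σ) * ψ (σ + indicZ2 Γt)) := by
        rw [prod_mul_distrib]; simp only [blockParities]; ring
    _ = _ := by
        simp only [conj_I_pow_mul_I_pow, prod_mul_distrib, prod_pow_eq_pow_sum, dotProduct,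
          parityChar_sum]
end

lemma even_sum_val_iff {κ : Type*} [Fintype κ] (a : κ → ZMod 2) :
    Even (∑ i, (a i).val) ↔ ∑ i, a i = 0 := by
  rw [← ZMod.natCast_eq_zero_iff_even]
  push_cast [ZMod.natCast_val, ZMod.cast_id', id]
  rfl

lemma sum_even_parityChar_dotProduct {κ : Type*} [Fintype κ] [DecidableEq κ]
    (s : κ → ZMod 2) :
    ∑ a : κ → ZMod 2 with ∑ i, a i = 0, parityChar (a ⬝ᵥ s)
      = 2⁻¹ * 2 ^ Fintype.card κ * ((if s = 0 then 1 else 0) + if s = 1 then 1 else 0) := by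
  have hshift (a : κ → ZMod 2) :
      parityChar (∑ i, a i) * parityChar (a ⬝ᵥ s) = parityChar ((1 + s) ⬝ᵥ a) := by
    rw [← AddChar.map_add_eq_mul, ← dotProduct_one, ← dotProduct_add, dotProduct_comm]
  have hone : 1 + s = 0 ↔ s = 1 := by
    rw [add_eq_zero_iff_eq_neg', ZModModule.neg_eq_self]
  rw [sum_filter_eq_parityChar]
  simp only [parityChar_zero, one_mul, hshift]
  simp only [dotProduct_comm _ s, sum_parityChar_dotProduct, hone]
  split_ifs <;> ring

section
variable {ι : Type*} [Fintype ι] [DecidableEq ι] {T : ℕ}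

lemma qInner_postState_self (Γ : Fin T → Finset ι) (a : Fin T → ZMod 2) (ψ : QubitSpace ι) :
    qInner (postState Γ (fun j => (a j).val) ψ) (postState Γ (fun j => (a j).val) ψ)
      = qInner ψ ψ := by
  refine sum_congr rfl fun σ _ => ?_
  rw [postState_apply, map_mul, mul_mul_mul_comm, Complex.conj_mul']
  simp

lemma ofReal_winProb_eq (Γ : Fin T → Finset ι) (Γt : Finset ι) (hcap : ∀ j, (Γ j ∩ Γt).card = 1)
    (ψ : QubitSpace ι) (hψ : qInner ψ ψ = 1) (a : Fin T → ZMod 2)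
    (ha : Even (∑ j, (a j).val)) :
    (winProb Γ Γt (fun j => (a j).val) ψ : ℂ)
      = 2⁻¹ * (1 + ∑ σ, parityChar (a ⬝ᵥ blockParities Γ σ)
          * (conj (ψ σ) * ψ (σ + indicZ2 Γt))) := by
  push_cast [winProb]
  rw [sum_filter_norm_qInner_chi_sq, qInner_postState_self, hψ, mul_sum]
  congr 3 with σ
  rw [conj_postState_mul_postState_add_indicZ2 Γ Γt hcap, rOf]
  linear_combination (parityChar (a ⬝ᵥ blockParities Γ σ) * (conj (ψ σ) * ψ (σ + indicZ2 Γt)))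
    * I_pow_mul_parityChar_half_eq_one ha

lemma sum_filter_blockParities_eq_one (Γ : Fin T → Finset ι) (Γt : Finset ι)
    (hcap : ∀ j, (Γ j ∩ Γt).card = 1) (ψ : QubitSpace ι) :
    ∑ σ with blockParities Γ σ = 1, conj (ψ σ) * ψ (σ + indicZ2 Γt)
      = ∑ σ with blockParities Γ σ = 0, conj (conj (ψ σ) * ψ (σ + indicZ2 Γt)) := by
  rw [sum_filter, sum_filter, ← Equiv.sum_comp (Equiv.addRight (indicZ2 Γt))]
  refine sum_congr rfl fun σ _ => ?_
  simp [blockParities_add_indicZ2 Γ Γt hcap, add_assoc, ZModModule.add_self, mul_comm]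

lemma norm_qInner_cat_sq_sub (S : Finset ι) (ψ : QubitSpace ι) (σ : ι → ZMod 2) :
    ‖qInner ψ ((((Real.sqrt 2 : ℝ) : ℂ))⁻¹ • (deltaVec σ + Vop S (deltaVec σ)))‖ ^ 2
      - ‖qInner ψ ((((Real.sqrt 2 : ℝ) : ℂ))⁻¹ • (deltaVec σ - Vop S (deltaVec σ)))‖ ^ 2
      = 2 * (conj (ψ σ) * ψ (σ + indicZ2 S)).re := by
  have hδ : deltaVec σ = Pi.single σ 1 := by
    funext τ; simp [deltaVec, Pi.single_apply]
  have hVδ : Vop S (Pi.single σ 1) = Pi.single (σ + indicZ2 S) 1 := by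
    funext τ
    simp [Vop, Pi.single_apply, ← eq_sub_iff_add_eq, ZModModule.sub_eq_add]
  have hinner (φ : QubitSpace ι) : qInner ψ φ = star ψ ⬝ᵥ φ := rfl
  simp only [hinner, dotProduct_smul, dotProduct_add, dotProduct_sub, hVδ, hδ, dotProduct_single,
    mul_one, smul_eq_mul, norm_mul, mul_pow, ← Complex.normSq_eq_norm_sq, Complex.normSq_add,
    Complex.normSq_sub, norm_inv, Complex.norm_real]
  simp
  ring

lemma ofReal_quantumWinProb_eq (hT : T ≠ 0) (Γ : Fin T → Finset ι) (Γt : Finset ι)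
    (hcap : ∀ j, (Γ j ∩ Γt).card = 1) (ψ : QubitSpace ι) (hψ : qInner ψ ψ = 1) :
    (quantumWinProb Γ Γt ψ : ℂ) = 2⁻¹ * (1
      + ∑ σ with blockParities Γ σ = 0, conj (ψ σ) * ψ (σ + indicZ2 Γt)
      + ∑ σ with blockParities Γ σ = 1, conj (ψ σ) * ψ (σ + indicZ2 Γt)) := by
  set C : (ι → ZMod 2) → ℂ := fun σ => conj (ψ σ) * ψ (σ + indicZ2 Γt)
  have hpow : (2 : ℂ) ^ T = 2 * 2 ^ (T - 1) := by rw [← pow_succ', Nat.sub_add_cancel (by omega)]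
  have h01 : (0 : Fin T → ZMod 2) ≠ 1 := fun h => by
    simpa using congrFun h ⟨0, Nat.pos_of_ne_zero hT⟩
  -- `Fin 2` and `ZMod 2` are definitionally equal
  change (((∑ a : Fin T → ZMod 2 with Even (∑ j, (a j).val),
    winProb Γ Γt (fun j => (a j).val) ψ) / 2 ^ (T - 1) : ℝ) : ℂ) = _
  rw [filter_congr fun a _ => even_sum_val_iff a]
  calc _ = (∑ a : Fin T → ZMod 2 with ∑ j, a j = 0,
          2⁻¹ * (1 + ∑ σ, parityChar (a ⬝ᵥ blockParities Γ σ) * C σ)) / 2 ^ (T - 1) := by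
        push_cast
        refine congrArg (· / _) (sum_congr rfl fun a ha => ?_)
        exact ofReal_winProb_eq Γ Γt hcap ψ hψ a ((even_sum_val_iff a).2 (mem_filter.1 ha).2)
    _ = 2⁻¹ * (∑ a : Fin T → ZMod 2 with ∑ j, a j = 0, parityChar (a ⬝ᵥ 0)
          + ∑ σ, (∑ a : Fin T → ZMod 2 with ∑ j, a j = 0, parityChar (a ⬝ᵥ blockParities Γ σ))
            * C σ) / 2 ^ (T - 1) := by
        simp only [dotProduct_zero, parityChar_zero, ← mul_sum, sum_add_distrib, sum_mul]
        rw [sum_comm]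
    _ = _ := by
        have h0 : ∑ a : Fin T → ZMod 2 with ∑ j, a j = 0, parityChar (a ⬝ᵥ 0)
            = 2⁻¹ * 2 ^ T := by
          rw [sum_even_parityChar_dotProduct]
          simp [h01]
        have hC : ∑ σ, (∑ a : Fin T → ZMod 2 with ∑ j, a j = 0,
              parityChar (a ⬝ᵥ blockParities Γ σ)) * C σ
            = 2⁻¹ * 2 ^ T * (∑ σ with blockParities Γ σ = 0, C σ
              + ∑ σ with blockParities Γ σ = 1, C σ) := by
          simp only [sum_even_parityChar_dotProduct, Fintype.card_fin, mul_assoc, ← mul_sum]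
          simp only [add_mul, ite_mul, one_mul, zero_mul, sum_add_distrib, sum_filter]
        rw [h0, hC, hpow]
        field_simp
        ring
end

theorem quantumWinProb_eq_cat_fidelities_general {ι : Type*} [Fintype ι] [DecidableEq ι]
    (T : ℕ) (hT : 3 ≤ T) (Γ : Fin T → Finset ι)
    (Γt : Finset ι) (hcap : ∀ j, (Γ j ∩ Γt).card = 1)
    (ψ : QubitSpace ι) (hψ : qInner ψ ψ = 1) :
    quantumWinProb Γ Γt ψ - 1 / 2
      = (1 / 2) *
          ∑ σ ∈ univ.filter (fun σ : ι → ZMod 2 => ∀ j, ∑ b ∈ Γ j, σ b = 0),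
            (‖qInner ψ
                ((((Real.sqrt 2 : ℝ) : ℂ))⁻¹ •
                  (deltaVec σ + Vop Γt (deltaVec σ)))‖ ^ 2
              - ‖qInner ψ
                ((((Real.sqrt 2 : ℝ) : ℂ))⁻¹ •
                  (deltaVec σ - Vop Γt (deltaVec σ)))‖ ^ 2) := by
  have hfilter : ∀ σ, blockParities Γ σ = 0 ↔ ∀ j, ∑ b ∈ Γ j, σ b = 0 := fun σ => funext_iff
  simp only [norm_qInner_cat_sq_sub, ← filter_congr fun σ _ => hfilter σ]
  apply Complex.ofReal_injective
  push_cast [ofReal_quantumWinProb_eq (by omega) Γ Γt hcap ψ hψ,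
    sum_filter_blockParities_eq_one Γ Γt hcap ψ, Complex.re_eq_add_conj]
  rw [add_assoc, ← sum_add_distrib]
  field_simp
  ring

/-- Lemma 1 of the paper: for any unit vector `ψ`, the quantum
winning probability of the strategy `𝒫_TC` on the instance
`(T, Γ₁, …, Γ_T, Γ̃)` satisfies
`p_qu(ψ) − 1/2 = (1/2) ∑_σ (|⟨ψ, φ⁺_σ⟩|² − |⟨ψ, φ⁻_σ⟩|²)`,
the sum running over configurations `σ` with `∑_{b∈Γ_j} σ b = 0` for all `j`,
where `φ^±_σ = (1/√2)(δ_σ ± V_{Γ̃} δ_σ)`. -/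
theorem quantumWinProb_eq_cat_fidelities {ι : Type*} [Fintype ι] [DecidableEq ι]
    (T : ℕ) (hT : 3 ≤ T) (Γ : Fin T → Finset ι)
    (hdisj : ∀ j k, j ≠ k → Disjoint (Γ j) (Γ k))
    (Γt : Finset ι) (hcap : ∀ j, (Γ j ∩ Γt).card = 1)
    (ψ : QubitSpace ι) (hψ : qInner ψ ψ = 1) :
    quantumWinProb Γ Γt ψ - 1 / 2
      = (1 / 2) *
          ∑ σ ∈ univ.filter (fun σ : ι → ZMod 2 => ∀ j, ∑ b ∈ Γ j, σ b = 0),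
            (‖qInner ψ
                ((((Real.sqrt 2 : ℝ) : ℂ))⁻¹ •
                  (deltaVec σ + Vop Γt (deltaVec σ)))‖ ^ 2
              - ‖qInner ψ
                ((((Real.sqrt 2 : ℝ) : ℂ))⁻¹ •
                  (deltaVec σ - Vop Γt (deltaVec σ)))‖ ^ 2) :=
  quantumWinProb_eq_cat_fidelities_general T hT Γ Γt hcap ψ hψ
end
end

section
/- Let T ≥ 3, let x_1, …, x_T ∈ ZMod L_x be distinct columns, y₀ ∈ ZMod L_y a row, and a : Fin T → {0,1} an input with ∑_j a_j even; set r = ((∑_j a_j)/2 mod 2). Then (∏_j W_{Γ_{x_j}}^{a_j/2}) (Φ + V_{Γ̃_{y₀}} Φ) = Φ + (−1)^r · V_{Γ̃_{y₀}} Φ, and this vector is an eigenvector of V_{Γ̃_{y₀}} with eigenvalue (−1)^r. -/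
open Finset

noncomputable section

/-! ### The square lattice on the torus -/

variable (Lx Ly : ℕ)

/-- Vertices of the `L_x × L_y` square lattice on the torus. -/
abbrev Vertex := ZMod Lx × ZMod Ly

/-- Bonds of the lattice: `((x,y), 0)` is the horizontal bond from `(x,y)` to
`(x+1,y)`, and `((x,y), 1)` the vertical bond from `(x,y)` to `(x,y+1)`. -/
abbrev Bond := (ZMod Lx × ZMod Ly) × Fin 2

variable [NeZero Lx] [NeZero Ly]

/-- The vertical Wilson loop `Γ_x = {((x,y),1) : y}`. -/
def gammaV (x : ZMod Lx) : Finset (Bond Lx Ly) :=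
  univ.filter (fun b => b.1.1 = x ∧ b.2 = 1)

/-- The horizontal Wilson loop `Γ^h_y = {((x,y),0) : x}`. -/
def gammaH (y : ZMod Ly) : Finset (Bond Lx Ly) :=
  univ.filter (fun b => b.1.2 = y ∧ b.2 = 0)

/-- The horizontal dual loop `Γ̃_y = {((x,y),1) : x}`. -/
def dualH (y : ZMod Ly) : Finset (Bond Lx Ly) :=
  univ.filter (fun b => b.1.2 = y ∧ b.2 = 1)

/-- The vertical dual loop `Δ_x = {((x,y),0) : y}`. -/
def dualV (x : ZMod Lx) : Finset (Bond Lx Ly) :=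
  univ.filter (fun b => b.1.1 = x ∧ b.2 = 0)

/-- The plaquette `P(x,y) = {((x,y),0), ((x,y),1), ((x,y+1),0), ((x+1,y),1)}`. -/
def plaqSet (v : Vertex Lx Ly) : Finset (Bond Lx Ly) :=
  {(v, 0), (v, 1), ((v.1, v.2 + 1), 0), ((v.1 + 1, v.2), 1)}

/-- The star `S(x,y) = {((x,y),0), ((x,y),1), ((x−1,y),0), ((x,y−1),1)}`. -/
def starSet (v : Vertex Lx Ly) : Finset (Bond Lx Ly) :=
  {(v, 0), (v, 1), ((v.1 - 1, v.2), 0), ((v.1, v.2 - 1), 1)}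

/-- The plaquette operator `A_{(x,y)} = W_{P(x,y)}`. -/
def Aop (v : Vertex Lx Ly) : Module.End ℂ (QubitSpace (Bond Lx Ly)) :=
  Wop (plaqSet Lx Ly v)

/-- The star operator `B_{(x,y)} = V_{S(x,y)}`. -/
def Bop (v : Vertex Lx Ly) : Module.End ℂ (QubitSpace (Bond Lx Ly)) :=
  Vop (starSet Lx Ly v)

/-- The basis vector at the all-zeros configuration. -/
def delta0 : QubitSpace (Bond Lx Ly) := fun σ => if σ = 0 then 1 else 0

/-- The star projector `(1/2)(1 + B_v)`. -/
def starProj (v : Vertex Lx Ly) : Module.End ℂ (QubitSpace (Bond Lx Ly)) :=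
  ((2 : ℂ)⁻¹) • (1 + Bop Lx Ly v)

lemma vop_commute {ι : Type*} [DecidableEq ι] (S T : Finset ι) :
    Commute (Vop S) (Vop T) := by
  apply LinearMap.ext; intro ψ; funext σ
  simp only [Module.End.mul_apply]
  show ψ (σ + indicZ2 S + indicZ2 T) = ψ (σ + indicZ2 T + indicZ2 S)
  rw [add_right_comm]

lemma starProj_commute (v w : Vertex Lx Ly) :
    Commute (starProj Lx Ly v) (starProj Lx Ly w) := by
  have h : Commute (Bop Lx Ly v) (Bop Lx Ly w) := vop_commute _ _
  have h1 : Commute (1 + Bop Lx Ly v) (1 + Bop Lx Ly w) :=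
    (Commute.one_left _).add_left (((Commute.one_right _).add_right h))
  exact (h1.smul_left _).smul_right _

/-- The (unnormalized) zero-flux ground state
`Φ = (∏_v (1/2)(1 + B_v)) δ₀` (the star projectors commute, so the product
is well-defined). -/
def Phi : QubitSpace (Bond Lx Ly) :=
  (Finset.univ.noncommProd (fun v : Vertex Lx Ly => starProj Lx Ly v)
    (fun v _ w _ _ => starProj_commute Lx Ly v w)) (delta0 Lx Ly)

/-- The norm induced by the inner product. -/
def qNorm {ι : Type*} [Fintype ι] [DecidableEq ι] (ψ : QubitSpace ι) : ℝ :=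
  Real.sqrt (qInner ψ ψ).re

/-! The operator `W_{Γ_x}` meets every star `S(v)` in an even number of bonds (none, or the two
vertical bonds at `v` and below `v`, which are distinct since `L_y ≥ 2`), so it commutes with every
star projector; as it fixes `δ₀`, it fixes `Φ`. It meets `Γ̃_{y₀}` in exactly one bond, so it
anticommutes with `V_{Γ̃_{y₀}}` and `V_{Γ̃_{y₀}} Φ` is a `(−1)`-eigenvector. Hence `W^{1/2}` acts
by `1` on `Φ` and by `i` on `V_{Γ̃_{y₀}} Φ`, and the team operations multiply `V_{Γ̃_{y₀}} Φ` by
`i^{∑ a_j} = (−1)^r`. The eigenvector claim holds because `V_{Γ̃_{y₀}}` is an involution. -/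

section Operators

variable {ι : Type*} [DecidableEq ι]

lemma sum_indicZ2 (Γ S : Finset ι) : ∑ b ∈ Γ, indicZ2 S b = (#(Γ ∩ S) : ZMod 2) := by
  simp [indicZ2]

lemma Wop_mul_Vop (Γ S : Finset ι) :
    Wop Γ * Vop S = ((-1 : ℂ) ^ #(Γ ∩ S)) • (Vop S * Wop Γ) := by
  ext ψ σ
  change (-1 : ℂ) ^ (∑ b ∈ Γ, σ b).val * ψ (σ + indicZ2 S)
    = (-1) ^ #(Γ ∩ S) * ((-1) ^ (∑ b ∈ Γ, (σ + indicZ2 S) b).val * ψ (σ + indicZ2 S))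
  have hsum : ∑ b ∈ Γ, (σ + indicZ2 S) b = ∑ b ∈ Γ, σ b + #(Γ ∩ S) := by
    simp [Finset.sum_add_distrib, sum_indicZ2]
  rw [hsum, ZMod.val_add, ← neg_one_pow_eq_pow_mod_two, ZMod.val_natCast,
    pow_add, ← neg_one_pow_eq_pow_mod_two]
  have hsq : ((-1 : ℂ) ^ #(Γ ∩ S)) ^ 2 = 1 := by rw [pow_right_comm, neg_one_sq, one_pow]
  linear_combination (-(-1 : ℂ) ^ (∑ b ∈ Γ, σ b).val * ψ (σ + indicZ2 S)) * hsq

lemma Wop_commute_Vop_of_even {Γ S : Finset ι} (h : Even #(Γ ∩ S)) :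
    Commute (Wop Γ) (Vop S) := by
  rw [Commute, SemiconjBy, Wop_mul_Vop, h.neg_one_pow, one_smul]

lemma Wop_Vop_apply_of_odd {Γ S : Finset ι} (h : Odd #(Γ ∩ S)) (ψ : QubitSpace ι) :
    Wop Γ (Vop S ψ) = -Vop S (Wop Γ ψ) := by
  rw [← Module.End.mul_apply, Wop_mul_Vop, h.neg_one_pow, LinearMap.smul_apply,
    neg_one_smul, Module.End.mul_apply]

lemma Vop_Vop (S : Finset ι) (ψ : QubitSpace ι) : Vop S (Vop S ψ) = ψ := by
  funext σ
  change ψ (σ + indicZ2 S + indicZ2 S) = ψ σ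
  rw [add_assoc, ZModModule.add_self, add_zero]

lemma Vop_add_smul_Vop (S : Finset ι) (ψ : QubitSpace ι) {c : ℂ} (hc : c * c = 1) :
    Vop S (ψ + c • Vop S ψ) = c • (ψ + c • Vop S ψ) := by
  rw [map_add, map_smul, Vop_Vop, smul_add, smul_smul, hc, one_smul, add_comm]

end Operators

section SquareRoot

variable {E : Type*} [AddCommGroup E] [Module ℂ E] (W : Module.End ℂ E) {v : E}

lemma halfPow_apply_of_eq_self (a : ℕ) (h : W v = v) : halfPow W a v = v := by
  unfold halfPow sqrtInv
  split_ifs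
  · rfl
  · simp only [LinearMap.add_apply, LinearMap.smul_apply, LinearMap.sub_apply,
      Module.End.one_apply, h]
    module

lemma halfPow_apply_of_eq_neg {a : ℕ} (ha : a ≤ 1) (h : W v = -v) :
    halfPow W a v = Complex.I ^ a • v := by
  unfold halfPow sqrtInv
  obtain rfl | rfl := Nat.le_one_iff_eq_zero_or_eq_one.mp ha
  · simp
  · simp only [one_ne_zero, if_false, LinearMap.add_apply, LinearMap.smul_apply,
      LinearMap.sub_apply, Module.End.one_apply, h]
    module

end SquareRoot

lemma list_prod_ofFn_apply_of_eigen {R M : Type*} [CommSemiring R] [AddCommMonoid M]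
    [Module R M] {T : ℕ} (f : Fin T → Module.End R M) (c : Fin T → R) {v : M}
    (h : ∀ j, f j v = c j • v) : (List.ofFn f).prod v = (∏ j, c j) • v := by
  induction T with
  | zero => simp
  | succ T ih =>
    rw [List.ofFn_succ, List.prod_cons, Module.End.mul_apply, ih _ _ fun j => h j.succ,
      map_smul, h, smul_smul, Fin.prod_univ_succ, mul_comm]

section PostState

variable {ι : Type*} [DecidableEq ι] {T : ℕ} (Γ : Fin T → Finset ι) (a : Fin T → ℕ)

lemma postState_add (ψ φ : QubitSpace ι) :
    postState Γ a (ψ + φ) = postState Γ a ψ + postState Γ a φ :=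
  map_add _ ψ φ

lemma postState_eq_smul {ψ : QubitSpace ι} (c : Fin T → ℂ)
    (h : ∀ j, halfPow (Wop (Γ j)) (a j) ψ = c j • ψ) :
    postState Γ a ψ = (∏ j, c j) • ψ :=
  list_prod_ofFn_apply_of_eigen _ c h

end PostState

lemma I_pow_sum_eq_neg_one_pow_rOf {T : ℕ} (a : Fin T → ℕ) (hae : Even (∑ j, a j)) :
    Complex.I ^ (∑ j, a j) = (-1) ^ (rOf a).val := by
  obtain ⟨m, hm⟩ := hae
  rw [rOf, hm, ← two_mul, Nat.mul_div_cancel_left m two_pos, ZMod.val_natCast,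
    ← neg_one_pow_eq_pow_mod_two, pow_mul, Complex.I_sq]

lemma card_gammaV_inter_starSet (hLy : 2 ≤ Ly) (x : ZMod Lx) (v : Vertex Lx Ly) :
    Even #(gammaV Lx Ly x ∩ starSet Lx Ly v) := by
  rw [gammaV, Finset.filter_inter, starSet]
  have hne : v.2 - 1 ≠ v.2 := by
    have : Fact (1 < Ly) := ⟨hLy⟩
    simp
  by_cases hx : v.1 = x
  · subst hx
    simp only [Fin.isValue, mem_univ, inter_insert_of_mem, inter_singleton_of_mem, filter_insert,
      zero_ne_one, and_false, ↓reduceIte, and_self, sub_eq_self, filter_singleton]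
    rw [Finset.card_pair (by simpa [Prod.ext_iff] using hne.symm)]
    exact even_two
  · simp [Finset.filter_insert, Finset.filter_singleton, hx]

lemma card_gammaV_inter_dualH (x : ZMod Lx) (y : ZMod Ly) :
    #(gammaV Lx Ly x ∩ dualH Lx Ly y) = 1 := by
  rw [Finset.card_eq_one]
  refine ⟨((x, y), 1), ?_⟩
  ext ⟨⟨x', y'⟩, d⟩
  simp only [gammaV, dualH, mem_inter, mem_filter, mem_univ, true_and, mem_singleton,
    Prod.mk.injEq]
  tauto

lemma Wop_delta0 (S : Finset (Bond Lx Ly)) : Wop S (delta0 Lx Ly) = delta0 Lx Ly := by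
  funext σ
  change (-1 : ℂ) ^ (∑ b ∈ S, σ b).val * delta0 Lx Ly σ = delta0 Lx Ly σ
  by_cases h : σ = 0 <;> simp [delta0, h]

lemma Wop_gammaV_Phi (hLy : 2 ≤ Ly) (x : ZMod Lx) :
    Wop (gammaV Lx Ly x) (Phi Lx Ly) = Phi Lx Ly := by
  have hstar (v : Vertex Lx Ly) : Commute (Wop (gammaV Lx Ly x)) (starProj Lx Ly v) :=
    ((Commute.one_right _).add_right
      (Wop_commute_Vop_of_even (card_gammaV_inter_starSet Lx Ly hLy x v))).smul_right _
  have hprod := Finset.noncommProd_commute univ (starProj Lx Ly)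
    (fun v _ w _ _ => starProj_commute Lx Ly v w) _ fun v _ => hstar v
  unfold Phi
  rw [← Module.End.mul_apply, hprod.eq, Module.End.mul_apply, Wop_delta0]

lemma Wop_gammaV_Vop_dualH_Phi (hLy : 2 ≤ Ly) (x : ZMod Lx) (y : ZMod Ly) :
    Wop (gammaV Lx Ly x) (Vop (dualH Lx Ly y) (Phi Lx Ly))
      = -Vop (dualH Lx Ly y) (Phi Lx Ly) := by
  rw [Wop_Vop_apply_of_odd (by rw [card_gammaV_inter_dualH]; exact odd_one),
    Wop_gammaV_Phi Lx Ly hLy]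

theorem postState_cat_general (Lx Ly : ℕ) [NeZero Lx] [NeZero Ly]
    (hLy : 2 ≤ Ly)
    (T : ℕ) (x : Fin T → ZMod Lx)
    (y₀ : ZMod Ly) (a : Fin T → ℕ) (ha : ∀ j, a j ≤ 1)
    (hae : Even (∑ j, a j)) :
    postState (fun j => gammaV Lx Ly (x j)) a
        (Phi Lx Ly + Vop (dualH Lx Ly y₀) (Phi Lx Ly))
      = Phi Lx Ly +
          ((-1 : ℂ) ^ (rOf a).val) • Vop (dualH Lx Ly y₀) (Phi Lx Ly) ∧
      Vop (dualH Lx Ly y₀)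
          (Phi Lx Ly +
            ((-1 : ℂ) ^ (rOf a).val) • Vop (dualH Lx Ly y₀) (Phi Lx Ly))
        = ((-1 : ℂ) ^ (rOf a).val) •
            (Phi Lx Ly +
              ((-1 : ℂ) ^ (rOf a).val) • Vop (dualH Lx Ly y₀) (Phi Lx Ly)) := by
  have hΦ : postState (fun j => gammaV Lx Ly (x j)) a (Phi Lx Ly) = Phi Lx Ly := by
    rw [postState_eq_smul _ a 1 fun j => by
      rw [Pi.one_apply, one_smul]
      exact halfPow_apply_of_eq_self _ _ (Wop_gammaV_Phi Lx Ly hLy (x j))]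
    simp
  have hVΦ : postState (fun j => gammaV Lx Ly (x j)) a (Vop (dualH Lx Ly y₀) (Phi Lx Ly))
      = ((-1 : ℂ) ^ (rOf a).val) • Vop (dualH Lx Ly y₀) (Phi Lx Ly) := by
    rw [postState_eq_smul _ a (fun j => Complex.I ^ a j) fun j =>
        halfPow_apply_of_eq_neg _ (ha j) (Wop_gammaV_Vop_dualH_Phi Lx Ly hLy (x j) y₀),
      Finset.prod_pow_eq_pow_sum, I_pow_sum_eq_neg_one_pow_rOf a hae]
  refine ⟨by rw [postState_add, hΦ, hVΦ], Vop_add_smul_Vop _ _ ?_⟩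
  rw [← pow_add, ← two_mul, pow_mul, neg_one_sq, one_pow]

/-- for distinct columns `x_1, …, x_T`, a row `y₀`, and a valid
input `a` (each `a j ∈ {0,1}`, `∑_j a_j` even, `r = ((∑_j a_j)/2) mod 2`),
the team operations map the unnormalized cat state `Φ + V_{Γ̃_{y₀}} Φ` to
`Φ + (−1)^r V_{Γ̃_{y₀}} Φ`, which is an eigenvector of `V_{Γ̃_{y₀}}` with
eigenvalue `(−1)^r`. -/
theorem postState_cat (Lx Ly : ℕ) [NeZero Lx] [NeZero Ly]
    (hLx : 2 ≤ Lx) (hLy : 2 ≤ Ly)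
    (T : ℕ) (hT : 3 ≤ T) (x : Fin T → ZMod Lx) (hx : Function.Injective x)
    (y₀ : ZMod Ly) (a : Fin T → ℕ) (ha : ∀ j, a j ≤ 1)
    (hae : Even (∑ j, a j)) :
    postState (fun j => gammaV Lx Ly (x j)) a
        (Phi Lx Ly + Vop (dualH Lx Ly y₀) (Phi Lx Ly))
      = Phi Lx Ly +
          ((-1 : ℂ) ^ (rOf a).val) • Vop (dualH Lx Ly y₀) (Phi Lx Ly) ∧
      Vop (dualH Lx Ly y₀)
          (Phi Lx Ly +
            ((-1 : ℂ) ^ (rOf a).val) • Vop (dualH Lx Ly y₀) (Phi Lx Ly))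
        = ((-1 : ℂ) ^ (rOf a).val) •
            (Phi Lx Ly +
              ((-1 : ℂ) ^ (rOf a).val) • Vop (dualH Lx Ly y₀) (Phi Lx Ly)) :=
  postState_cat_general Lx Ly hLy T x y₀ a ha hae
end
end

section
/- For every integer T ≥ 3 there do not exist functions f_1, …, f_T : ZMod 2 → ZMod 2 and a constant c ∈ ZMod 2 such that for every a : Fin T → ℕ with a_j ∈ {0,1} for all j and ∑_j a_j even, one has c + ∑_j f_j(a_j mod 2) = (((∑_j a_j)/2) mod 2) in ZMod 2. Consequently the toric code game with T ≥ 3 teams admits no perfect classical (deterministic, local) strategy, i.e., it is a genuine nonlocal game. -/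
open Finset

lemma sum_ite_pair {T : ℕ} {M : Type*} [AddCommMonoid M] (p q : Fin T) (hpq : p ≠ q)
    (x : Fin T → M) : ∑ j, (if j = p ∨ j = q then x j else 0) = x p + x q := by
  have : ∀ j : Fin T, (j = p ∨ j = q) ↔ j ∈ ({p, q} : Finset (Fin T)) := by
    intro j; simp
  simp_rw [this]
  rw [Finset.sum_ite_mem, Finset.univ_inter,
    Finset.sum_insert (by simpa using hpq), Finset.sum_singleton]

/-- for `T ≥ 3` there is no deterministic local classical strategy
for the toric code game: there are no functions `f_j : ZMod 2 → ZMod 2` and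
constant `c ∈ ZMod 2` such that for every promised input `a : Fin T → ℕ`
(with `a j ∈ {0,1}` and `∑ j, a j` even) one has
`c + ∑ j, f j (a j mod 2) = ((∑ j, a j)/2) mod 2`. -/
theorem no_perfect_classical_strategy (T : ℕ) (hT : 3 ≤ T) :
    ¬ ∃ (f : Fin T → ZMod 2 → ZMod 2) (c : ZMod 2),
        ∀ a : Fin T → ℕ, (∀ j, a j ≤ 1) → Even (∑ j, a j) →
          c + ∑ j, f j ((a j : ZMod 2)) = (((∑ j, a j) / 2 : ℕ) : ZMod 2) := by
  rintro ⟨f, c, h⟩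
  -- zero input
  have h0 : c + ∑ j, f j 0 = 0 := by
    have := h (fun _ => 0) (fun j => by norm_num) (by simp)
    simpa using this
  -- pair inputs
  have hpair : ∀ p q : Fin T, p ≠ q →
      (f p 1 + f p 0) + (f q 1 + f q 0) = 1 := by
    intro p q hpq
    set a : Fin T → ℕ := fun j => if j = p ∨ j = q then 1 else 0 with ha
    have hsum : ∑ j, a j = 2 := by
      have := sum_ite_pair p q hpq (fun _ => (1:ℕ))
      simpa [ha] using this
    have hle : ∀ j, a j ≤ 1 := by
      intro j; simp only [ha]; split <;> norm_num
    have heven : Even (∑ j, a j) := by rw [hsum]; exact even_two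
    have key := h a hle heven
    rw [hsum] at key
    norm_num at key
    -- rewrite the sum
    have hcast : ∀ j, ((a j : ZMod 2)) = if j = p ∨ j = q then 1 else 0 := by
      intro j; simp only [ha]; split <;> simp
    have hterm : ∀ j, f j ((a j : ZMod 2))
        = f j 0 + (if j = p ∨ j = q then f j 1 + f j 0 else 0) := by
      intro j
      rw [hcast j]
      split
      · rw [add_comm (f j 1) (f j 0), ← add_assoc, CharTwo.add_self_eq_zero, zero_add]
      · ring
    have hsplit : ∑ j, f j ((a j : ZMod 2))
        = (∑ j, f j 0) + ((f p 1 + f p 0) + (f q 1 + f q 0)) := by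
      calc ∑ j, f j ((a j : ZMod 2))
          = ∑ j, (f j 0 + (if j = p ∨ j = q then f j 1 + f j 0 else 0)) := by
            exact Finset.sum_congr rfl (fun j _ => hterm j)
        _ = (∑ j, f j 0) + ∑ j, (if j = p ∨ j = q then f j 1 + f j 0 else 0) := by
            rw [Finset.sum_add_distrib]
        _ = (∑ j, f j 0) + ((f p 1 + f p 0) + (f q 1 + f q 0)) := by
            congr 1
            rw [sum_ite_pair p q hpq]
    rw [hsplit, ← add_assoc, h0, zero_add] at key
    exact key
  -- three distinct indices
  have h2 : 2 < T := hT
  let i0 : Fin T := ⟨0, by omega⟩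
  let i1 : Fin T := ⟨1, by omega⟩
  let i2 : Fin T := ⟨2, by omega⟩
  have h01 := hpair i0 i1 (by simp [i0, i1, Fin.ext_iff])
  have h02 := hpair i0 i2 (by simp [i0, i2, Fin.ext_iff])
  have h12 := hpair i1 i2 (by simp [i1, i2, Fin.ext_iff])
  set g0 := f i0 1 + f i0 0
  set g1 := f i1 1 + f i1 0
  set g2 := f i2 1 + f i2 0
  have : (g0 + g1) + (g0 + g2) + (g1 + g2) = 1 := by
    rw [h01, h02, h12]; decide
  have h2' : (g0 + g1) + (g0 + g2) + (g1 + g2) = 0 := by ring_nf; rw [show (2:ZMod 2) = 0 by decide]; ring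
  rw [h2'] at this
  exact absurd this (by decide)
end
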